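/- Let ℓ ≥ 3. For any pair of consecutive elements x < y of V̄_ℓ (i.e., x,y ∈ V̄_ℓ and no element of V̄_ℓ lies strictly between them), we have y − x ∈ {F_{ℓ−2}, F_{ℓ−1}}. -/
import Mathlib


noncomputable section

/-- `F i` is the Fibonacci number `F_i` of the paper (`F_0 = 1`, `F_1 = 1`, `F_2 = 2`, ...). -/
def F (i : ℕ) : ℕ := Nat.fib (i + 1)

/-- `x` belongs to the set `F̄ = {0,1,2,3,5,8,...}` of all Fibonacci numbers (including `0`). -/
def IsFib (x : ℕ) : Prop := ∃ i : ℕ, Nat.fib i = x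

open scoped Classical in
/-- The map `ῑ : ℕ → ℕ`: `ῑ(x) = x` if `x ∈ F̄`, and `ῑ(x) = x - 2 F_{i-2}`
if `F_i < x < F_{i+1}` for the (unique) integer `i ≥ 3`. -/
noncomputable def iotaBar (x : ℕ) : ℕ :=
  if IsFib x then x
  else x - 2 * F (sInf {i : ℕ | x < F (i + 1)} - 2)

/-- `ᾱ(x)` is the eventual constant value of the iterates of `ῑ` at `x`
(the iterates stabilize after at most `x` steps). -/
noncomputable def alphaBar (x : ℕ) : ℕ := iotaBar^[x] x

/-- `V̄_ℓ = {x ∈ ℕ : ᾱ(x) ≥ F_ℓ}`. -/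
def VBar (ℓ : ℕ) : Set ℕ := {x : ℕ | F ℓ ≤ alphaBar x}

/-- `x < y` are consecutive elements of `S`. -/
def ConsecIn (S : Set ℕ) (x y : ℕ) : Prop :=
  x ∈ S ∧ y ∈ S ∧ x < y ∧ ∀ z ∈ S, ¬(x < z ∧ z < y)

/-! ### Auxiliary lemmas -/

lemma F_add (i : ℕ) : F (i + 2) = F (i + 1) + F i := by
  show Nat.fib (i + 2 + 1) = _
  rw [show i + 2 + 1 = (i + 1) + 2 by omega, Nat.fib_add_two]
  simp [F]
  omega

lemma F_pos (i : ℕ) : 0 < F i := Nat.fib_pos.mpr (Nat.succ_pos i)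

lemma F_mono {a b : ℕ} (h : a ≤ b) : F a ≤ F b := Nat.fib_mono (by omega)

lemma F_lt_F {a b : ℕ} (hab : a < b) (hb : 2 ≤ b) : F a < F b := by
  have h1 : F a ≤ F (b - 1) := F_mono (by omega)
  have h2 : Nat.fib b < Nat.fib (b + 1) := Nat.fib_lt_fib_succ hb
  have h3 : F (b - 1) < F b := by
    have : b - 1 + 1 = b := by omega
    simpa [F, this] using h2
  omega

lemma le_of_F_le {a b : ℕ} (ha : 2 ≤ a) (h : F a ≤ F b) : a ≤ b := by
  by_contra hc
  exact absurd h (not_le.mpr (F_lt_F (by omega) ha))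

lemma F_three : F 3 = 3 := by decide

lemma lt_F_succ (n : ℕ) : n < F (n + 1) := by
  induction n with
  | zero => decide
  | succ k ih =>
    have h := F_add k
    have hp := F_pos k
    have : F (k + 1 + 1) = F (k + 1) + F k := h
    omega

lemma isFib_F (i : ℕ) : IsFib (F i) := ⟨i + 1, rfl⟩

lemma iotaBar_of_fib {x : ℕ} (h : IsFib x) : iotaBar x = x := by
  simp [iotaBar, h]

lemma iotaBar_le (x : ℕ) : iotaBar x ≤ x := by
  unfold iotaBar
  split
  · exact le_rfl
  · exact Nat.sub_le _ _

lemma iotaBar_lt {x : ℕ} (h : ¬IsFib x) : iotaBar x < x := by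
  have hx : 0 < x := by
    rcases Nat.eq_zero_or_pos x with h0 | h0
    · exact absurd ⟨0, by simp [h0]⟩ h
    · exact h0
  unfold iotaBar
  rw [if_neg h]
  have := F_pos (sInf {i : ℕ | x < F (i + 1)} - 2)
  omega

lemma iter_fib {x : ℕ} (h : IsFib x) (k : ℕ) : iotaBar^[k] x = x := by
  induction k with
  | zero => rfl
  | succ n ih => rw [Function.iterate_succ_apply', ih, iotaBar_of_fib h]

lemma key_stab : ∀ x : ℕ, (∀ n, x ≤ n → iotaBar^[n] x = iotaBar^[x] x) ∧ IsFib (iotaBar^[x] x) := by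
  intro x
  induction x using Nat.strong_induction_on with
  | _ x ih =>
    by_cases hf : IsFib x
    · exact ⟨fun n _ => by rw [iter_fib hf, iter_fib hf], by rw [iter_fib hf]; exact hf⟩
    · have hx : x ≠ 0 := by
        intro h0; exact hf ⟨0, by simp [h0]⟩
      obtain ⟨m, rfl⟩ := Nat.exists_eq_succ_of_ne_zero hx
      have hy : iotaBar (m + 1) < m + 1 := iotaBar_lt hf
      set y := iotaBar (m + 1) with hydef
      have hym : y ≤ m := Nat.lt_succ_iff.mp hy
      have IH := ih y hy
      have base : iotaBar^[m + 1] (m + 1) = iotaBar^[y] y := by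
        rw [Function.iterate_succ_apply, ← hydef]
        exact IH.1 m hym
      refine ⟨fun n hn => ?_, by rw [base]; exact IH.2⟩
      obtain ⟨k, rfl⟩ : ∃ k, n = k + 1 := ⟨n - 1, by omega⟩
      rw [Function.iterate_succ_apply, ← hydef, IH.1 k (by omega), base]

lemma alphaBar_fib {x : ℕ} (h : IsFib x) : alphaBar x = x := iter_fib h x

lemma alphaBar_iota {x : ℕ} (h : ¬IsFib x) : alphaBar x = alphaBar (iotaBar x) := by
  have hx : x ≠ 0 := by intro h0; exact h ⟨0, by simp [h0]⟩
  obtain ⟨m, rfl⟩ := Nat.exists_eq_succ_of_ne_zero hx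
  have hy : iotaBar (m + 1) < m + 1 := iotaBar_lt h
  unfold alphaBar
  rw [Function.iterate_succ_apply]
  exact (key_stab (iotaBar (m + 1))).1 m (by omega)

lemma iter_le (x k : ℕ) : iotaBar^[k] x ≤ x := by
  induction k with
  | zero => exact le_rfl
  | succ n ih =>
    rw [Function.iterate_succ_apply']
    exact le_trans (iotaBar_le _) ih

lemma alphaBar_le (x : ℕ) : alphaBar x ≤ x := iter_le x x

lemma alphaBar_F (i : ℕ) : alphaBar (F i) = F i := alphaBar_fib (isFib_F i)

lemma not_isFib_between {i x : ℕ} (h1 : F i < x) (h2 : x < F (i + 1)) (hi : 3 ≤ i) :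
    ¬IsFib x := by
  rintro ⟨k, hk⟩
  have hx4 : 4 ≤ x := by
    have : F 3 ≤ F i := F_mono hi
    rw [F_three] at this
    omega
  have hk1 : k ≠ 0 := by
    rintro rfl
    simp [Nat.fib] at hk
    omega
  obtain ⟨k', rfl⟩ := Nat.exists_eq_succ_of_ne_zero hk1
  have hF : F k' = x := hk
  -- F i < F k' < F (i+1): contradiction
  have h3 : i < k' := by
    by_contra hc
    have : F k' ≤ F i := F_mono (by omega)
    omega
  have : F (i + 1) ≤ F k' := F_mono (by omega)
  omega

lemma sInf_interval {i x : ℕ} (h1 : F i ≤ x) (h2 : x < F (i + 1)) :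
    sInf {j : ℕ | x < F (j + 1)} = i := by
  apply le_antisymm
  · exact Nat.sInf_le h2
  · by_contra hc
    push_neg at hc
    have hmem : sInf {j : ℕ | x < F (j + 1)} ∈ {j : ℕ | x < F (j + 1)} :=
      Nat.sInf_mem ⟨i, h2⟩
    have : F (sInf {j : ℕ | x < F (j + 1)} + 1) ≤ F i := F_mono (by omega)
    simp only [Set.mem_setOf_eq] at hmem
    omega

lemma iotaBar_interval {i r : ℕ} (h0 : 0 < r) (h1 : r < F (i + 2)) :
    iotaBar (F (i + 3) + r) = F i + r := by
  have hub : F (i + 3) + r < F (i + 4) := by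
    have h : F (i + 4) = F (i + 3) + F (i + 2) := F_add (i + 2)
    omega
  have hnf : ¬IsFib (F (i + 3) + r) :=
    not_isFib_between (by omega) hub (by omega)
  unfold iotaBar
  rw [if_neg hnf, sInf_interval (by omega) hub]
  have e1 : F (i + 3) = F (i + 2) + F (i + 1) := F_add (i + 1)
  have e2 : F (i + 2) = F (i + 1) + F i := F_add i
  have : i + 3 - 2 = i + 1 := by omega
  rw [this]
  omega

lemma alphaBar_shift {i r : ℕ} (h0 : 0 < r) (h1 : r < F (i + 2)) :
    alphaBar (F (i + 3) + r) = alphaBar (F i + r) := by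
  have hub : F (i + 3) + r < F (i + 4) := by
    have h : F (i + 4) = F (i + 3) + F (i + 2) := F_add (i + 2); omega
  rw [alphaBar_iota (not_isFib_between (by omega) hub (by omega)),
    iotaBar_interval h0 h1]

lemma vbar_shift {ℓ i r : ℕ} (h0 : 0 < r) (h1 : r < F (i + 2)) :
    F (i + 3) + r ∈ VBar ℓ ↔ F i + r ∈ VBar ℓ := by
  unfold VBar
  rw [Set.mem_setOf_eq, Set.mem_setOf_eq, alphaBar_shift h0 h1]

lemma mem_vbar_lb {ℓ x : ℕ} (h : x ∈ VBar ℓ) : F ℓ ≤ x :=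
  le_trans h (alphaBar_le x)

lemma F_mem_vbar {ℓ i : ℕ} (h : F ℓ ≤ F i) : F i ∈ VBar ℓ := by
  show F ℓ ≤ alphaBar (F i)
  rw [alphaBar_F]
  exact h

/-- The interval `(F_ℓ, F_{ℓ+1})` contains no element of `V̄_ℓ`. -/
lemma empty_first_interval {n z : ℕ} (h1 : F (n + 3) < z) (h2 : z < F (n + 4)) :
    z ∉ VBar (n + 3) := by
  intro hz
  have hr1 : 0 < z - F (n + 3) := by omega
  have hr2 : z - F (n + 3) < F (n + 2) := by
    have h : F (n + 4) = F (n + 3) + F (n + 2) := F_add (n + 2); omega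
  have hz' : F n + (z - F (n + 3)) ∈ VBar (n + 3) := by
    rw [← vbar_shift hr1 hr2]
    have : F (n + 3) + (z - F (n + 3)) = z := by omega
    rw [this]; exact hz
  have hlb := mem_vbar_lb hz'
  have e3 : F (n + 3) = F (n + 2) + F (n + 1) := F_add (n + 1)
  have hm : F n ≤ F (n + 1) := F_mono (by omega)
  omega

lemma exists_interval {x : ℕ} (hx : 3 ≤ x) :
    ∃ m : ℕ, F (m + 3) ≤ x ∧ x < F (m + 4) := by
  have hne : {j : ℕ | x < F (j + 1)}.Nonempty := ⟨x, lt_F_succ x⟩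
  set i := sInf {j : ℕ | x < F (j + 1)} with hi
  have hmem : i ∈ {j : ℕ | x < F (j + 1)} := Nat.sInf_mem hne
  simp only [Set.mem_setOf_eq] at hmem
  have hi3 : 3 ≤ i := by
    by_contra hc
    have : F (i + 1) ≤ F 3 := F_mono (by omega)
    rw [F_three] at this
    omega
  have hlow : F i ≤ x := by
    by_contra hc
    have : i ≤ i - 1 := Nat.sInf_le (show x < F ((i - 1) + 1) by
      have : i - 1 + 1 = i := by omega
      rw [this]; omega)
    omega
  exact ⟨i - 3, by have h3 : i - 3 + 3 = i := by omega
                   have h4 : i - 3 + 4 = i + 1 := by omega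
                   rw [h3, h4]; exact ⟨hlow, hmem⟩⟩

lemma mem_up {ℓ m z : ℕ} (hz : z ∈ VBar ℓ) (h1 : F m < z) (h2 : z < F m + F (m + 2)) :
    F (m + 3) + (z - F m) ∈ VBar ℓ := by
  rw [vbar_shift (show 0 < z - F m by omega) (show z - F m < F (m + 2) by omega)]
  have h : F m + (z - F m) = z := by omega
  rw [h]; exact hz

lemma mem_down {ℓ m z : ℕ} (hz : z ∈ VBar ℓ) (h1 : F (m + 3) < z) (h2 : z < F (m + 4)) :
    F m + (z - F (m + 3)) ∈ VBar ℓ := by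
  have h4 : F (m + 4) = F (m + 3) + F (m + 2) := F_add (m + 2)
  rw [← vbar_shift (show 0 < z - F (m + 3) by omega)
      (show z - F (m + 3) < F (m + 2) by omega)]
  have h : F (m + 3) + (z - F (m + 3)) = z := by omega
  rw [h]; exact hz

theorem VBar_consecutive_gap (ℓ : ℕ) (hℓ : 3 ≤ ℓ) (x y : ℕ)
    (h : ConsecIn (VBar ℓ) x y) :
    y - x = F (ℓ - 2) ∨ y - x = F (ℓ - 1) := by
  obtain ⟨n, rfl⟩ : ∃ n, ℓ = n + 3 := ⟨ℓ - 3, by omega⟩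
  show y - x = F (n + 1) ∨ y - x = F (n + 2)
  clear hℓ
  induction y using Nat.strong_induction_on generalizing x with
  | _ y IH =>
  obtain ⟨hx, hy, hxy, hb⟩ := h
  have hxF : F (n + 3) ≤ x := mem_vbar_lb hx
  have hx3 : 3 ≤ x := by
    have h3 : F 3 ≤ F (n + 3) := F_mono (by omega)
    rw [F_three] at h3; omega
  obtain ⟨m, hml, hmu⟩ := exists_interval hx3
  have hFm4 : F (m + 4) = F (m + 3) + F (m + 2) := F_add (m + 2)
  have hFm3 : F (m + 3) = F (m + 2) + F (m + 1) := F_add (m + 1)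
  have hnm : n ≤ m := by
    by_contra hc
    have h1 : F (m + 4) ≤ F (n + 3) := F_mono (by omega)
    omega
  have hyub : y ≤ F (m + 4) := by
    by_contra hc
    exact hb (F (m + 4)) (F_mem_vbar (F_mono (by omega))) ⟨by omega, by omega⟩
  rcases eq_or_lt_of_le hml with hxeq | hxlt
  · -- x = F (m+3)
    rcases eq_or_lt_of_le hyub with hyeq | hylt
    · -- Case B : x = F (m+3), y = F (m+4)
      have hm_eq : m = n := by
        by_contra hne
        rcases Nat.lt_or_ge m (n + 2) with hm1 | hm2
        · -- m = n + 1
          have hm1' : m = n + 1 := by omega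
          subst hm1'
          simp only [show n + 1 + 1 = n + 2 from rfl, show n + 1 + 2 = n + 3 from rfl,
            show n + 1 + 3 = n + 4 from rfl, show n + 1 + 4 = n + 5 from rfl] at *
          have hz : F (n + 4) + F (n + 2) ∈ VBar (n + 3) := by
            rw [vbar_shift (F_pos (n + 2)) (F_lt_F (by omega) (by omega))]
            have he : F (n + 3) = F (n + 2) + F (n + 1) := F_add (n + 1)
            have : F (n + 1) + F (n + 2) = F (n + 3) := by omega
            rw [this]
            exact F_mem_vbar le_rfl
          have hp := F_pos (n + 2)
          have hlt : F (n + 2) < F (n + 3) := F_lt_F (by omega) (by omega)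
          exact hb _ hz ⟨by omega, by omega⟩
        · -- m ≥ n + 2
          obtain ⟨p, rfl⟩ : ∃ p, m = p + 1 := ⟨m - 1, by omega⟩
          simp only [show p + 1 + 1 = p + 2 from rfl, show p + 1 + 2 = p + 3 from rfl,
            show p + 1 + 3 = p + 4 from rfl, show p + 1 + 4 = p + 5 from rfl] at *
          have hz : F (p + 4) + F p ∈ VBar (n + 3) := by
            rw [vbar_shift (F_pos p) (F_lt_F (by omega) (by omega))]
            have he : F (p + 2) = F (p + 1) + F p := F_add p
            have : F (p + 1) + F p = F (p + 2) := by omega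
            rw [this]
            exact F_mem_vbar (F_mono (by omega))
          have hp := F_pos p
          have hlt : F p < F (p + 3) := F_lt_F (by omega) (by omega)
          exact hb _ hz ⟨by omega, by omega⟩
      subst hm_eq
      right; omega
    · -- Case C : x = F (m+3), y < F (m+4)
      have hry1 : 0 < y - F (m + 3) := by omega
      have hry2 : y - F (m + 3) < F (m + 2) := by omega
      have hy' : F m + (y - F (m + 3)) ∈ VBar (n + 3) := mem_down hy (by omega) hylt
      rcases Nat.lt_or_ge m (n + 3) with hms | hmb
      · -- m ∈ {n, n+1, n+2}
        rcases Nat.lt_or_ge m (n + 1) with hm0 | hm1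
        · -- m = n : contradiction
          have hm0' : m = n := by omega
          have hlb := mem_vbar_lb hy'
          have h1 : F m ≤ F (m + 1) := F_mono (by omega)
          have h2 : F (m + 3) = F (n + 3) := by rw [hm0']
          omega
        rcases Nat.lt_or_ge m (n + 2) with hm1' | hm2
        · -- m = n + 1 : gap F (n+2)
          have hme : m = n + 1 := by omega
          subst hme
          simp only [show n + 1 + 1 = n + 2 from rfl, show n + 1 + 2 = n + 3 from rfl,
            show n + 1 + 3 = n + 4 from rfl, show n + 1 + 4 = n + 5 from rfl] at *
          have hlb := mem_vbar_lb hy'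
          -- r_y ≥ F (n+2)
          have he : F (n + 3) = F (n + 2) + F (n + 1) := F_add (n + 1)
          have hge : F (n + 2) ≤ y - F (n + 4) := by omega
          -- r_y ≤ F (n+2)
          have hle : y - F (n + 4) ≤ F (n + 2) := by
            by_contra hc
            have hz : F (n + 4) + F (n + 2) ∈ VBar (n + 3) := by
              rw [vbar_shift (F_pos (n + 2)) (F_lt_F (by omega) (by omega))]
              have : F (n + 1) + F (n + 2) = F (n + 3) := by omega
              rw [this]
              exact F_mem_vbar le_rfl
            have hp := F_pos (n + 2)
            exact hb _ hz ⟨by omega, by omega⟩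
          right; omega
        · -- m = n + 2 : gap F (n+1)
          have hme : m = n + 2 := by omega
          subst hme
          simp only [show n + 2 + 1 = n + 3 from rfl, show n + 2 + 2 = n + 4 from rfl,
            show n + 2 + 3 = n + 5 from rfl, show n + 2 + 4 = n + 6 from rfl] at *
          have hlb := mem_vbar_lb hy'
          have he : F (n + 3) = F (n + 2) + F (n + 1) := F_add (n + 1)
          have hge : F (n + 1) ≤ y - F (n + 5) := by omega
          have hle : y - F (n + 5) ≤ F (n + 1) := by
            by_contra hc
            have hz : F (n + 5) + F (n + 1) ∈ VBar (n + 3) := by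
              rw [vbar_shift (F_pos (n + 1)) (F_lt_F (by omega) (by omega))]
              have : F (n + 2) + F (n + 1) = F (n + 3) := by omega
              rw [this]
              exact F_mem_vbar le_rfl
            have hp := F_pos (n + 1)
            exact hb _ hz ⟨by omega, by omega⟩
          left; omega
      · -- m ≥ n + 3 : reduce via IH with pair (F m, y')
        have hFmV : F m ∈ VBar (n + 3) := F_mem_vbar (F_mono (by omega))
        have hcon : ConsecIn (VBar (n + 3)) (F m) (F m + (y - F (m + 3))) := by
          refine ⟨hFmV, hy', by omega, fun z hz ⟨h1, h2⟩ => ?_⟩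
          have hw := mem_up (m := m) hz h1 (by omega)
          refine hb _ hw ⟨by omega, by omega⟩
        have hlt : F m < F (m + 3) := F_lt_F (by omega) (by omega)
        have := IH (F m + (y - F (m + 3))) (by omega) (F m) hcon
        omega
    -- end x = F (m+3)
  · -- x > F (m+3)
    have hrx1 : 0 < x - F (m + 3) := by omega
    have hrx2 : x - F (m + 3) < F (m + 2) := by omega
    have hx' : F m + (x - F (m + 3)) ∈ VBar (n + 3) := mem_down hx hxlt hmu
    rcases eq_or_lt_of_le hyub with hyeq | hylt
    · -- Case D : y = F (m+4)
      rcases Nat.lt_or_ge m (n + 2) with hms | hmb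
      · rcases Nat.lt_or_ge m (n + 1) with hm0 | hm1
        · -- m = n : contradiction
          have hm0' : m = n := by omega
          have hlb := mem_vbar_lb hx'
          have h1 : F m ≤ F (m + 1) := F_mono (by omega)
          have h2 : F (m + 3) = F (n + 3) := by rw [hm0']
          omega
        · -- m = n + 1 : gap F (n+1)
          have hme : m = n + 1 := by omega
          subst hme
          simp only [show n + 1 + 1 = n + 2 from rfl, show n + 1 + 2 = n + 3 from rfl,
            show n + 1 + 3 = n + 4 from rfl, show n + 1 + 4 = n + 5 from rfl] at *
          have hlb := mem_vbar_lb hx'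
          have he : F (n + 3) = F (n + 2) + F (n + 1) := F_add (n + 1)
          have hge : F (n + 2) ≤ x - F (n + 4) := by omega
          have hle : x - F (n + 4) ≤ F (n + 2) := by
            by_contra hc
            -- then F (n+3) < x' < F (n+4) : contradiction with empty_first_interval
            have h1 : F (n + 1) < F (n + 2) := F_lt_F (by omega) (by omega)
            exact empty_first_interval (show F (n + 3) < F (n + 1) + (x - F (n + 4)) by omega)
              (show F (n + 1) + (x - F (n + 4)) < F (n + 4) by omega) hx'
          left; omega
      · -- m ≥ n + 2 : reduce via IH with pair (x', F m + F (m+2))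
        obtain ⟨p, rfl⟩ : ∃ p, m = p + 2 := ⟨m - 2, by omega⟩
        simp only [show p + 2 + 1 = p + 3 from rfl, show p + 2 + 2 = p + 4 from rfl,
          show p + 2 + 3 = p + 5 from rfl, show p + 2 + 4 = p + 6 from rfl] at *
        have hy' : F (p + 2) + F (p + 4) ∈ VBar (n + 3) := by
          have he2 : F (p + 3) = F (p + 2) + F (p + 1) := F_add (p + 1)
          have hcomm : F (p + 2) + F (p + 4) = F (p + 4) + F (p + 2) := by omega
          rw [hcomm, vbar_shift (F_pos (p + 2)) (F_lt_F (by omega) (by omega))]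
          have : F (p + 1) + F (p + 2) = F (p + 3) := by omega
          rw [this]
          exact F_mem_vbar (F_mono (by omega))
        have hcon : ConsecIn (VBar (n + 3)) (F (p + 2) + (x - F (p + 5)))
            (F (p + 2) + F (p + 4)) := by
          refine ⟨hx', hy', by omega, fun z hz ⟨h1, h2⟩ => ?_⟩
          have hw : F (p + 5) + (z - F (p + 2)) ∈ VBar (n + 3) :=
            mem_up (m := p + 2) hz (by omega) (show z < F (p + 2) + F (p + 4) by omega)
          refine hb _ hw ⟨by omega, by omega⟩
        have hlt : F (p + 2) < F (p + 5) := F_lt_F (by omega) (by omega)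
        have := IH (F (p + 2) + F (p + 4)) (by omega) _ hcon
        omega
    · -- Case A : interior-interior
      have hy' : F m + (y - F (m + 3)) ∈ VBar (n + 3) := mem_down hy (by omega) hylt
      have hcon : ConsecIn (VBar (n + 3)) (F m + (x - F (m + 3)))
          (F m + (y - F (m + 3))) := by
        refine ⟨hx', hy', by omega, fun z hz ⟨h1, h2⟩ => ?_⟩
        have hw := mem_up (m := m) hz (by omega) (by omega)
        refine hb _ hw ⟨by omega, by omega⟩
      have hlt : F m < F (m + 3) := F_lt_F (by omega) (by omega)
      have := IH (F m + (y - F (m + 3))) (by omega) _ hcon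
      omega
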